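/- arXiv:1303.2527 — 4 statements merged into one kernel-verified Lean document; each statement's English description precedes it below -/
import Mathlib

section
/- Let φ(z) = Σ_{n≥1} B_n zⁿ be analytic and injective on the open unit disk U = {z ∈ ℂ : |z| < 1} with φ(0) = 0 and with image φ(U) a convex set, and let h(z) = Σ_{n≥1} h_n zⁿ be analytic on U with h(0) = 0. If h is subordinate to φ on U, then |h_n| ≤ |B₁| for every n ≥ 1, i.e. |h⁽ⁿ⁾(0)/n!| ≤ |φ'(0)| for all n ∈ ℕ, n ≥ 1. -/
/-!
Let `ζ` be a primitive `n`-th root of unity. The average `p(z) = (1/n) ∑ₖ h(ζᵏ z)` of the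
rotations of `h` keeps exactly the Taylor coefficients of `h` of index divisible by `n`, so
`p(z) = hₙ zⁿ + O(zⁿ⁺¹)`. Since `h` takes its values in the convex set `φ(U)`, so does `p`, and
the univalence of `φ` makes `σ = φ⁻¹ ∘ p` a holomorphic self-map of `U` with `p = φ ∘ σ`. As
`φ'(0) ≠ 0`, `σ` also vanishes to order `n` at `0`, and comparing `n`-th coefficients gives
`hₙ = φ'(0) σₙ`, while `|σₙ| ≤ 1` by Cauchy's estimate.
-/

open Metric Filter Set Finset Function
open scoped Topology

section IteratedDeriv

variable {𝕜 : Type*} [NontriviallyNormedField 𝕜]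

theorem iteratedDeriv_pow_mul_zero {G : 𝕜 → 𝕜} {n : ℕ} (hG : ContDiffAt 𝕜 n G 0) :
    iteratedDeriv n (fun z => z ^ n * G z) 0 = n.factorial * G 0 := by
  rw [iteratedDeriv_fun_mul (f := (· ^ n)) (by fun_prop) hG,
    Finset.sum_eq_single_of_mem n (by simp) fun i _ hi => by
      rw [iteratedDeriv_fun_pow_zero, if_neg hi]; simp]
  rw [iteratedDeriv_fun_pow_zero, if_pos rfl]
  simp

theorem iteratedDeriv_comp_const_mul_of_isOpen {f : 𝕜 → 𝕜} {s : Set 𝕜} {x c : 𝕜} {n : ℕ}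
    (hs : IsOpen s) (hf : ContDiffOn 𝕜 n f s) (hc : MapsTo (c * ·) s s) (hx : x ∈ s) :
    iteratedDeriv n (fun z => f (c * z)) x = c ^ n * iteratedDeriv n f (c * x) := by
  rw [← iteratedDerivWithin_of_isOpen hs hx, ← iteratedDerivWithin_of_isOpen hs (hc hx)]
  exact iteratedDerivWithin_comp_const_smul hx hs.uniqueDiffOn hf c hc

theorem AnalyticAt.analyticOrderAt_comp_eq_of_deriv_ne_zero {φ σ : 𝕜 → 𝕜} {z₀ : 𝕜}
    (hφ : AnalyticAt 𝕜 φ 0) (hφ₀ : φ 0 = 0) (hd : deriv φ 0 ≠ 0) (hσ : AnalyticAt 𝕜 σ z₀)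
    (hσ₀ : σ z₀ = 0) : analyticOrderAt (φ ∘ σ) z₀ = analyticOrderAt σ z₀ := by
  rw [(hσ₀ ▸ hφ : AnalyticAt 𝕜 φ (σ z₀)).analyticOrderAt_comp hσ, hσ₀,
    hφ.analyticOrderAt_eq_one_of_zero_deriv_ne_zero hφ₀ hd, one_mul]
  simp

variable [CompleteSpace 𝕜]

theorem AnalyticAt.exists_eventuallyEq_pow_mul_of_le_analyticOrderAt {f : 𝕜 → 𝕜} {n : ℕ}
    (hf : AnalyticAt 𝕜 f 0) (hn : n ≤ analyticOrderAt f 0) :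
    ∃ G, AnalyticAt 𝕜 G 0 ∧ (f =ᶠ[𝓝 0] fun z => z ^ n * G z) ∧
      iteratedDeriv n f 0 = n.factorial * G 0 := by
  obtain ⟨G, hG, hfG⟩ := (natCast_le_analyticOrderAt hf).mp hn
  have hfG' : f =ᶠ[𝓝 0] fun z => z ^ n * G z := hfG.mono fun z hz => by simpa using hz
  exact ⟨G, hG, hfG', by rw [hfG'.iteratedDeriv_eq, iteratedDeriv_pow_mul_zero hG.contDiffAt]⟩

theorem iteratedDeriv_comp_zero_of_le_analyticOrderAt {φ σ : 𝕜 → 𝕜} {n : ℕ}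
    (hφ : AnalyticAt 𝕜 φ 0) (hφ₀ : φ 0 = 0) (hσ : AnalyticAt 𝕜 σ 0) (hσ₀ : σ 0 = 0)
    (hn : n ≤ analyticOrderAt σ 0) :
    iteratedDeriv n (φ ∘ σ) 0 = deriv φ 0 * iteratedDeriv n σ 0 := by
  obtain ⟨S, hS, hσS, hσn⟩ := hσ.exists_eventuallyEq_pow_mul_of_le_analyticOrderAt hn
  obtain ⟨V, hV, hφV, hφ₁⟩ := hφ.exists_eventuallyEq_pow_mul_of_le_analyticOrderAt (n := 1)
    (by simpa [Order.one_le_iff_ne_zero, hφ.analyticOrderAt_ne_zero] using hφ₀)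
  have hσ_tendsto : Tendsto σ (𝓝 0) (𝓝 0) := by simpa [hσ₀] using hσ.continuousAt.tendsto
  have hφσ : φ ∘ σ =ᶠ[𝓝 0] fun z => z ^ n * (S z * V (σ z)) := by
    filter_upwards [hσ_tendsto.eventually (hφV.mono fun w hw => by simpa using hw), hσS]
      with z hφz hσz
    rw [comp_apply, hφz, hσz]
    ring
  have hVσ : AnalyticAt 𝕜 (fun z => V (σ z)) 0 := by
    rw [← hσ₀] at hV
    exact hV.comp hσ
  simp only [iteratedDeriv_one, Nat.factorial_one, Nat.cast_one, one_mul] at hφ₁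
  rw [hφσ.iteratedDeriv_eq, iteratedDeriv_pow_mul_zero (hS.fun_mul hVσ).contDiffAt, hσn, hσ₀, hφ₁]
  ring

end IteratedDeriv

theorem norm_iteratedDeriv_le_of_forall_mem_ball_norm_le {F : Type*} [NormedAddCommGroup F]
    [NormedSpace ℂ F] [CompleteSpace F] {f : ℂ → F} {c : ℂ} {R C : ℝ} (n : ℕ) (hR : 0 < R)
    (hf : DifferentiableOn ℂ f (ball c R)) (hC : ∀ z ∈ ball c R, ‖f z‖ ≤ C) :
    ‖iteratedDeriv n f c‖ ≤ n.factorial * C / R ^ n := by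
  have hbound : ∀ r ∈ Ioo 0 R, ‖iteratedDeriv n f c‖ ≤ n.factorial * C / r ^ n := fun r hr =>
    Complex.norm_iteratedDeriv_le_of_forall_mem_sphere_norm_le n hr.1
      (hf.diffContOnCl_ball (closedBall_subset_ball hr.2))
      fun z hz => hC z (sphere_subset_closedBall.trans (closedBall_subset_ball hr.2) hz)
  have hcont : ContinuousAt (fun r : ℝ => n.factorial * C / r ^ n) R := by
    fun_prop (disch := positivity)
  exact ge_of_tendsto (hcont.tendsto.mono_left (nhdsWithin_le_nhds (s := Iio R)))
    (Filter.mem_of_superset (Ioo_mem_nhdsLT hR) hbound)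

theorem norm_iteratedDeriv_comp_div_factorial_le {φ σ : ℂ → ℂ} {n : ℕ}
    (hφ : AnalyticAt ℂ φ 0) (hφ₀ : φ 0 = 0) (hd : deriv φ 0 ≠ 0)
    (hσ : DifferentiableOn ℂ σ (ball 0 1)) (hσ_maps : MapsTo σ (ball 0 1) (ball 0 1))
    (hσ₀ : σ 0 = 0) (hn : n ≤ analyticOrderAt (φ ∘ σ) 0) :
    ‖iteratedDeriv n (φ ∘ σ) 0 / n.factorial‖ ≤ ‖deriv φ 0‖ := by
  have hσ_an : AnalyticAt ℂ σ 0 := hσ.analyticAt (ball_mem_nhds 0 one_pos)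
  rw [hφ.analyticOrderAt_comp_eq_of_deriv_ne_zero hφ₀ hd hσ_an hσ₀] at hn
  have hcauchy : ‖iteratedDeriv n σ 0‖ ≤ n.factorial := by
    simpa using norm_iteratedDeriv_le_of_forall_mem_ball_norm_le n one_pos hσ
      fun z hz => (mem_ball_zero_iff.mp (hσ_maps hz)).le
  rw [iteratedDeriv_comp_zero_of_le_analyticOrderAt hφ hφ₀ hσ_an hσ₀ hn, mul_div_assoc,
    norm_mul, norm_div, Complex.norm_natCast]
  exact mul_le_of_le_one_right (norm_nonneg _) ((div_le_one (by positivity)).mpr hcauchy)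

theorem IsPrimitiveRoot.geom_sum_pow_eq_zero {K : Type*} [Field K] {ζ : K} {n j : ℕ}
    (hζ : IsPrimitiveRoot ζ n) (hj : ¬ n ∣ j) : ∑ k ∈ range n, (ζ ^ j) ^ k = 0 := by
  have hne : ζ ^ j ≠ 1 := fun h => hj ((hζ.pow_eq_one_iff_dvd j).mp h)
  rw [geom_sum_eq hne, ← pow_mul, mul_comm, pow_mul, hζ.pow_eq_one, one_pow, sub_self, zero_div]

theorem exists_ne_pow_eq_pow_of_mem_nhds {n : ℕ} (hn : 2 ≤ n) {V : Set ℂ} (hV : V ∈ 𝓝 0) :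
    ∃ a ∈ V, ∃ b ∈ V, a ≠ b ∧ a ^ n = b ^ n := by
  obtain ⟨ζ, hζ⟩ : ∃ ζ : ℂ, IsPrimitiveRoot ζ n := ⟨_, Complex.isPrimitiveRoot_exp n (by omega)⟩
  have hζV : ∀ᶠ w in 𝓝 (0 : ℂ), ζ * w ∈ V :=
    (continuous_const_mul ζ).continuousAt.preimage_mem_nhds (by simpa using hV)
  obtain ⟨w, ⟨hwV, hζwV⟩, hw₀⟩ :=
    ((Filter.Eventually.and hV hζV).filter_mono nhdsWithin_le_nhds
      |>.and self_mem_nhdsWithin).exists (f := 𝓝[≠] (0 : ℂ))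
  refine ⟨w, hwV, ζ * w, hζwV, fun h => hζ.ne_one (by omega) ?_, ?_⟩
  · exact (mul_eq_right₀ hw₀).mp h.symm
  · rw [mul_pow, hζ.pow_eq_one, one_mul]

theorem AnalyticAt.exists_eventually_pow_eq {g : ℂ → ℂ} {z₀ : ℂ} {n : ℕ}
    (hg : AnalyticAt ℂ g z₀) (hg₀ : g z₀ ≠ 0) (hn : n ≠ 0) :
    ∃ ρ : ℂ → ℂ, AnalyticAt ℂ ρ z₀ ∧ ∀ᶠ z in 𝓝 z₀, ρ z ^ n = g z := by
  obtain ⟨c, hc⟩ := IsAlgClosed.exists_pow_nat_eq (g z₀) (Nat.pos_of_ne_zero hn)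
  -- `g z / g z₀` is close to `1`, where the principal logarithm is analytic.
  refine ⟨fun z => c * Complex.exp (Complex.log (g z / g z₀) / n), ?_, ?_⟩
  · refine analyticAt_const.mul (((analyticAt_clog ?_).comp hg.div_const).div_const.cexp)
    simp [hg₀]
  · filter_upwards [hg.continuousAt.eventually_ne hg₀] with z hz
    rw [mul_pow, ← Complex.exp_nat_mul, mul_div_cancel₀ _ (Nat.cast_ne_zero.mpr hn),
      Complex.exp_log (div_ne_zero hz hg₀), hc, mul_div_cancel₀ _ hg₀]

theorem AnalyticAt.exists_eventually_eq_add_pow {φ : ℂ → ℂ} {z₀ : ℂ} {n : ℕ}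
    (hφ : AnalyticAt ℂ φ z₀) (hn : analyticOrderAt (φ · - φ z₀) z₀ = n) :
    ∃ F : ℂ → ℂ, ∃ F' ≠ 0, HasStrictDerivAt F F' z₀ ∧ F z₀ = 0 ∧
      ∀ᶠ z in 𝓝 z₀, φ z = φ z₀ + F z ^ n := by
  have hsub := hφ.fun_sub (analyticAt_const (v := φ z₀))
  have hn₀ : n ≠ 0 := by
    rintro rfl
    simpa using hsub.analyticOrderAt_ne_zero.not.mp (by simpa using hn)
  obtain ⟨g, hg, hg₀, hφg⟩ := hsub.analyticOrderAt_eq_natCast.mp hn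
  obtain ⟨ρ, hρ, hρg⟩ := hg.exists_eventually_pow_eq hg₀ hn₀
  have hρ₀ : ρ z₀ ≠ 0 := fun h => hg₀ (by rw [← hρg.self_of_nhds, h, zero_pow hn₀])
  refine ⟨fun z => (z - z₀) * ρ z, ρ z₀, hρ₀, ?_, by simp, ?_⟩
  · simpa using HasStrictDerivAt.fun_mul ((hasStrictDerivAt_id z₀).sub_const z₀)
      hρ.hasStrictDerivAt
  · filter_upwards [hφg, hρg] with z hφz hρz
    rw [mul_pow, hρz, ← smul_eq_mul, ← hφz, add_sub_cancel]

theorem not_injOn_of_eventually_eq_add_pow {φ F : ℂ → ℂ} {F' z₀ : ℂ} {n : ℕ} (hn : 2 ≤ n)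
    (hF : HasStrictDerivAt F F' z₀) (hF' : F' ≠ 0) (hF₀ : F z₀ = 0)
    (hφ : ∀ᶠ z in 𝓝 z₀, φ z = φ z₀ + F z ^ n) {U : Set ℂ} (hU : U ∈ 𝓝 z₀) : ¬ InjOn φ U := by
  intro hinj
  have hS : F '' {z | z ∈ U ∧ φ z = φ z₀ + F z ^ n} ∈ 𝓝 0 := by
    rw [← hF₀, ← hF.map_nhds_eq hF']
    exact image_mem_map (inter_mem hU hφ)
  obtain ⟨_, ⟨x, hx, rfl⟩, _, ⟨y, hy, rfl⟩, hne, hpow⟩ := exists_ne_pow_eq_pow_of_mem_nhds hn hS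
  exact hne (congrArg F (hinj hx.1 hy.1 (by rw [hx.2, hy.2, hpow])))

theorem AnalyticOnNhd.deriv_ne_zero_of_injOn {φ : ℂ → ℂ} {U : Set ℂ} (hφ : AnalyticOnNhd ℂ φ U)
    (hU : IsOpen U) (hinj : InjOn φ U) {z₀ : ℂ} (hz₀ : z₀ ∈ U) : deriv φ z₀ ≠ 0 := by
  intro hd
  have hUz₀ : U ∈ 𝓝 z₀ := hU.mem_nhds hz₀
  have hfin : analyticOrderAt (φ · - φ z₀) z₀ ≠ ⊤ := by
    rw [Ne, analyticOrderAt_eq_top]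
    intro hconst
    obtain ⟨z, ⟨hzU, hz⟩, hne⟩ := ((Filter.Eventually.and hUz₀ hconst).filter_mono
      nhdsWithin_le_nhds |>.and self_mem_nhdsWithin).exists (f := 𝓝[≠] z₀)
    exact hne (hinj hzU hz₀ (sub_eq_zero.mp hz))
  obtain ⟨n, hn⟩ := ENat.ne_top_iff_exists.mp hfin
  have h2 : 2 ≤ n := by
    have : ((2 : ℕ) : ℕ∞) ≤ analyticOrderAt (φ · - φ z₀) z₀ := by
      refine (natCast_le_analyticOrderAt_iff_iteratedDeriv_eq_zero
        ((hφ z₀ hz₀).fun_sub analyticAt_const)).mpr fun i hi => ?_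
      interval_cases i <;> simp [hd]
    exact_mod_cast hn ▸ this
  obtain ⟨F, F', hF', hF, hF₀, hφF⟩ := (hφ z₀ hz₀).exists_eventually_eq_add_pow hn.symm
  exact not_injOn_of_eventually_eq_add_pow h2 hF hF' hF₀ hφF hUz₀ hinj

theorem AnalyticOnNhd.hasStrictDerivAt_invFunOn {φ : ℂ → ℂ} {U : Set ℂ}
    (hφ : AnalyticOnNhd ℂ φ U) (hU : IsOpen U) (hinj : InjOn φ U) {z : ℂ} (hz : z ∈ U) :
    HasStrictDerivAt (invFunOn φ U) (deriv φ z)⁻¹ (φ z) :=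
  (hφ z hz).hasStrictDerivAt.to_local_left_inverse (hφ.deriv_ne_zero_of_injOn hU hinj hz)
    (eventually_of_mem (hU.mem_nhds hz) fun _ hw => hinj.leftInvOn_invFunOn hw)

theorem exists_eqOn_comp_of_mapsTo_image {φ p : ℂ → ℂ} {U V : Set ℂ}
    (hφ : AnalyticOnNhd ℂ φ U) (hU : IsOpen U) (hinj : InjOn φ U)
    (hp : DifferentiableOn ℂ p V) (hpV : MapsTo p V (φ '' U)) :
    ∃ σ : ℂ → ℂ, DifferentiableOn ℂ σ V ∧ MapsTo σ V U ∧ EqOn p (φ ∘ σ) V := by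
  refine ⟨invFunOn φ U ∘ p, fun z hz => ?_, fun z hz => invFunOn_mem (hpV hz),
    fun z hz => (invFunOn_eq (hpV hz)).symm⟩
  obtain ⟨x, hx, hxz⟩ := hpV hz
  have hinv := (hφ.hasStrictDerivAt_invFunOn hU hinj hx).hasDerivAt.differentiableAt
  rw [hxz] at hinv
  exact hinv.comp_differentiableWithinAt z (hp z hz)

noncomputable def rotationAverage (f : ℂ → ℂ) (ζ : ℂ) (n : ℕ) (z : ℂ) : ℂ :=
  (n : ℝ)⁻¹ • ∑ k ∈ range n, f (ζ ^ k * z)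

section rotationAverage

variable {f : ℂ → ℂ} {ζ : ℂ} {n : ℕ}

theorem pow_mul_mem_ball {z : ℂ} {r : ℝ} (hζ : ‖ζ‖ ≤ 1) (hz : z ∈ ball (0 : ℂ) r) (k : ℕ) :
    ζ ^ k * z ∈ ball (0 : ℂ) r := by
  rw [mem_ball_zero_iff] at hz ⊢
  calc ‖ζ ^ k * z‖ = ‖ζ‖ ^ k * ‖z‖ := by rw [norm_mul, norm_pow]
    _ ≤ ‖z‖ := mul_le_of_le_one_left (norm_nonneg z) (pow_le_one₀ (norm_nonneg ζ) hζ)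
    _ < r := hz

theorem Convex.mapsTo_rotationAverage {S : Set ℂ} {r : ℝ} (hS : Convex ℝ S)
    (hf : MapsTo f (ball 0 r) S) (hζ : ‖ζ‖ ≤ 1) (hn : n ≠ 0) :
    MapsTo (rotationAverage f ζ n) (ball 0 r) S := fun z hz => by
  rw [rotationAverage, Finset.smul_sum]
  exact hS.sum_mem (fun _ _ => by positivity) (by simp [hn])
    fun k _ => hf (pow_mul_mem_ball hζ hz k)

theorem differentiableOn_rotationAverage {r : ℝ} (hf : DifferentiableOn ℂ f (ball 0 r))
    (hζ : ‖ζ‖ ≤ 1) : DifferentiableOn ℂ (rotationAverage f ζ n) (ball 0 r) := by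
  intro z hz
  have hsum : DifferentiableAt ℂ (fun w => ∑ k ∈ range n, f (ζ ^ k * w)) z :=
    DifferentiableAt.fun_sum fun k _ => (hf.differentiableAt
      (isOpen_ball.mem_nhds (pow_mul_mem_ball hζ hz k))).comp z (differentiableAt_id.const_mul _)
  exact (hsum.const_smul (n : ℝ)⁻¹).differentiableWithinAt

theorem AnalyticAt.comp_const_mul_zero (hf : AnalyticAt ℂ f 0) (c : ℂ) :
    AnalyticAt ℂ (fun z => f (c * z)) 0 :=
  (by simpa using hf : AnalyticAt ℂ f (c * 0)).comp (analyticAt_const.mul analyticAt_id)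

theorem analyticAt_rotationAverage (hf : AnalyticAt ℂ f 0) :
    AnalyticAt ℂ (rotationAverage f ζ n) 0 :=
  (Finset.analyticAt_fun_sum _ fun k _ => hf.comp_const_mul_zero (ζ ^ k)).const_smul
    (c := (n : ℝ)⁻¹)

theorem iteratedDeriv_rotationAverage_zero (hf : AnalyticAt ℂ f 0) (hζ : ‖ζ‖ ≤ 1) (j : ℕ) :
    iteratedDeriv j (rotationAverage f ζ n) 0 =
      (n : ℝ)⁻¹ • ((∑ k ∈ range n, (ζ ^ j) ^ k) * iteratedDeriv j f 0) := by
  obtain ⟨r, hr, hfr⟩ := hf.exists_ball_analyticOnNhd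
  have hrot (k : ℕ) : iteratedDeriv j (fun z => f (ζ ^ k * z)) 0 =
      (ζ ^ j) ^ k * iteratedDeriv j f 0 := by
    rw [iteratedDeriv_comp_const_mul_of_isOpen isOpen_ball hfr.contDiffOn_of_completeSpace
      (fun z hz => pow_mul_mem_ball hζ hz k) (mem_ball_self hr), mul_zero, pow_right_comm]
  unfold rotationAverage
  rw [iteratedDeriv_fun_const_smul_field, Finset.sum_mul,
    iteratedDeriv_fun_sum fun k _ => (hf.comp_const_mul_zero (ζ ^ k)).contDiffAt]
  simp only [hrot]

theorem IsPrimitiveRoot.iteratedDeriv_rotationAverage_self (hζ : IsPrimitiveRoot ζ n)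
    (hn : n ≠ 0) (hf : AnalyticAt ℂ f 0) :
    iteratedDeriv n (rotationAverage f ζ n) 0 = iteratedDeriv n f 0 := by
  rw [iteratedDeriv_rotationAverage_zero hf (hζ.norm'_eq_one hn).le, hζ.pow_eq_one]
  simp [hn]

theorem IsPrimitiveRoot.natCast_le_analyticOrderAt_rotationAverage (hζ : IsPrimitiveRoot ζ n)
    (hf : AnalyticAt ℂ f 0) (hf₀ : f 0 = 0) : n ≤ analyticOrderAt (rotationAverage f ζ n) 0 := by
  refine (natCast_le_analyticOrderAt_iff_iteratedDeriv_eq_zero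
    (analyticAt_rotationAverage hf)).mpr fun i hi => ?_
  rcases Nat.eq_zero_or_pos i with rfl | hi₀
  · simp [rotationAverage, hf₀]
  · rw [iteratedDeriv_rotationAverage_zero hf (hζ.norm'_eq_one (by omega)).le,
      hζ.geom_sum_pow_eq_zero (Nat.not_dvd_of_pos_of_lt hi₀ hi), zero_mul, smul_zero]

end rotationAverage

/-- Rogosinski's lemma: if `h ≺ φ` on the unit disk, where `φ` is convex univalent with
`φ(0) = 0`, then every Taylor coefficient of `h` at `0` is bounded by `|φ'(0)|`. -/
theorem rogosinski_coeff_bound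
    (φ h : ℂ → ℂ)
    (hφ_an : AnalyticOnNhd ℂ φ (ball 0 1)) (hφ0 : φ 0 = 0)
    (hφ_inj : Set.InjOn φ (ball 0 1))
    (hφ_cvx : Convex ℝ (φ '' ball 0 1))
    (hh_an : AnalyticOnNhd ℂ h (ball 0 1)) (hh0 : h 0 = 0)
    (hsub : ∃ ω : ℂ → ℂ, AnalyticOnNhd ℂ ω (ball 0 1) ∧ ω 0 = 0 ∧
      (∀ z ∈ ball (0 : ℂ) 1, ‖ω z‖ < 1) ∧
      ∀ z ∈ ball (0 : ℂ) 1, h z = φ (ω z)) :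
    ∀ n : ℕ, 1 ≤ n →
      ‖iteratedDeriv n h 0 / (n.factorial : ℂ)‖ ≤ ‖deriv φ 0‖ := by
  obtain ⟨ω, -, -, hω_lt, hhω⟩ := hsub
  intro n hn
  have hn₀ : n ≠ 0 := by omega
  have h0 : (0 : ℂ) ∈ ball (0 : ℂ) 1 := mem_ball_self one_pos
  obtain ⟨ζ, hζ⟩ : ∃ ζ : ℂ, IsPrimitiveRoot ζ n := ⟨_, Complex.isPrimitiveRoot_exp n hn₀⟩
  have hζ_norm : ‖ζ‖ ≤ 1 := (hζ.norm'_eq_one hn₀).le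
  have hh_maps : MapsTo h (ball 0 1) (φ '' ball 0 1) := fun z hz =>
    hhω z hz ▸ mem_image_of_mem φ (mem_ball_zero_iff.mpr (hω_lt z hz))
  obtain ⟨σ, hσ_diff, hσ_maps, hpσ⟩ := exists_eqOn_comp_of_mapsTo_image hφ_an isOpen_ball hφ_inj
    (differentiableOn_rotationAverage hh_an.differentiableOn hζ_norm)
    (hφ_cvx.mapsTo_rotationAverage hh_maps hζ_norm hn₀)
  have hσ₀ : σ 0 = 0 := hφ_inj (hσ_maps h0) h0 <| by
    rw [← comp_apply (f := φ), ← hpσ h0, hφ0]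
    simp [rotationAverage, hh0]
  have hpσ_nhds := hpσ.eventuallyEq_of_mem (ball_mem_nhds 0 one_pos)
  calc ‖iteratedDeriv n h 0 / n.factorial‖ = ‖iteratedDeriv n (φ ∘ σ) 0 / n.factorial‖ := by
        rw [← hζ.iteratedDeriv_rotationAverage_self hn₀ (hh_an 0 h0), hpσ_nhds.iteratedDeriv_eq]
    _ ≤ ‖deriv φ 0‖ := by
        refine norm_iteratedDeriv_comp_div_factorial_le (hφ_an 0 h0) hφ0
          (hφ_an.deriv_ne_zero_of_injOn isOpen_ball hφ_inj h0) hσ_diff hσ_maps hσ₀ ?_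
        rw [← analyticOrderAt_congr hpσ_nhds]
        exact hζ.natCast_le_analyticOrderAt_rotationAverage (hh_an 0 h0) hh0
end

section
/- Let 0 ≤ α < 1, β ∈ (−π/2, π/2), and let f ∈ Σ with inverse extension g satisfy Re(e^{iβ} f'(z)) > α·cos β for all z ∈ U and Re(e^{iβ} g'(w)) > α·cos β for all w ∈ U. Then |a₂| ≤ √(2(1−α)cos β / 3) and |a₃| ≤ 2(1−α)cos β / 3, where a₂ = f''(0)/2 and a₃ = f'''(0)/6. -/
/-!
Write `e^{iβ} h' = α cos β + p` for `h = f` and `h = g`: then `Re p > 0` on the disc and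
`Re p(0) = (1 - α) cos β`, so Carathéodory's lemma `|p⁽ⁿ⁾(0)| ≤ 2 n! Re p(0)` bounds both
`|f'''(0)|` and `|g'''(0)|` by `4 (1 - α) cos β`. Differentiating `f (g w) = w` three times gives
`f'''(0) + g'''(0) = 3 f''(0)²`, which turns the two third-derivative bounds into the bound on `a₂`.

Carathéodory's lemma comes from the mean value property: on `|z| = r` the `n`-th Taylor coefficient
of `p` is the average of `z⁻ⁿ p`, and for `n ≥ 1` the average of `z⁻ⁿ conj p = r⁻²ⁿ conj (zⁿ p)`
vanishes, so it is also the average of `z⁻ⁿ · 2 Re p`, of modulus at most `2 r⁻ⁿ Re p(0)`.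
-/

open Metric Real Complex Filter Topology

open scoped Nat ComplexConjugate

namespace Real

theorem norm_circleAverage_le {E : Type*} [NormedAddCommGroup E] [NormedSpace ℝ E]
    (f : ℂ → E) (c : ℂ) (R : ℝ) :
    ‖circleAverage f c R‖ ≤ circleAverage (fun z ↦ ‖f z‖) c R := by
  rw [circleAverage_def, circleAverage_def, norm_smul, smul_eq_mul, norm_inv,
    Real.norm_of_nonneg two_pi_pos.le]
  gcongr
  exact intervalIntegral.norm_integral_le_integral_norm two_pi_pos.le

end Real

section Caratheodory

variable {p : ℂ → ℂ} {r : ℝ}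

theorem circleAverage_inv_pow_mul_eq_iteratedDeriv (hr : 0 < r)
    (hp : DifferentiableOn ℂ p (closedBall 0 r)) (n : ℕ) :
    circleAverage (fun z ↦ (z ^ n)⁻¹ * p z) 0 r = iteratedDeriv n p 0 / n ! := by
  rw [circleAverage_eq_circleIntegral hr.ne']
  have hcauchy := hp.circleIntegral_one_div_sub_center_pow_smul hr n
  simp only [sub_zero, smul_eq_mul] at hcauchy ⊢
  rw [show (fun z : ℂ ↦ z⁻¹ * ((z ^ n)⁻¹ * p z)) = fun z ↦ 1 / z ^ (n + 1) * p z by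
    ext z; rw [pow_succ]; field_simp, hcauchy]
  field_simp

theorem circleAverage_inv_pow_mul_conj_eq_zero (hr : 0 < r)
    (hp : DifferentiableOn ℂ p (closedBall 0 r)) {n : ℕ} (hn : n ≠ 0) :
    circleAverage (fun z ↦ (z ^ n)⁻¹ * conj (p z)) 0 r = 0 := by
  have hmean : circleAverage (fun z ↦ z ^ n * p z) 0 r = 0 := by
    have hd : DiffContOnCl ℂ (fun z ↦ z ^ n * p z) (ball 0 |r|) :=
      ((differentiableOn_id.pow n).mul hp).diffContOnCl_ball (by rw [abs_of_pos hr])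
    rw [hd.circleAverage, zero_pow hn, zero_mul]
  have hint : CircleIntegrable (fun z ↦ z ^ n * p z) 0 r :=
    ((continuous_pow n).continuousOn.mul hp.continuousOn).mono sphere_subset_closedBall
      |>.circleIntegrable hr.le
  calc circleAverage (fun z ↦ (z ^ n)⁻¹ * conj (p z)) 0 r
      = circleAverage (fun z ↦ ((r ^ (2 * n))⁻¹ : ℝ) • conj (z ^ n * p z)) 0 r := by
        apply circleAverage_congr_sphere
        intro z hz
        rw [mem_sphere_zero_iff_norm, abs_of_pos hr] at hz
        simp only [inv_def, map_mul, map_pow, normSq_eq_norm_sq, hz, Complex.real_smul]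
        push_cast
        ring
    _ = 0 := by
        rw [circleAverage_fun_smul]
        have hconj := Complex.conjCLE.toContinuousLinearMap.circleAverage_comp_comm hint
        simp only [Function.comp_def, ContinuousLinearEquiv.coe_coe, conjCLE_apply] at hconj
        rw [hconj, hmean, map_zero, smul_zero]

theorem iteratedDeriv_div_factorial_eq_circleAverage_re (hr : 0 < r)
    (hp : DifferentiableOn ℂ p (closedBall 0 r)) {n : ℕ} (hn : n ≠ 0) :
    iteratedDeriv n p 0 / n ! =
      circleAverage (fun z ↦ (z ^ n)⁻¹ * (2 * ((p z).re : ℂ))) 0 r := by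
  have hcont : ContinuousOn p (sphere 0 r) := hp.continuousOn.mono sphere_subset_closedBall
  have hpow : ContinuousOn (fun z : ℂ ↦ (z ^ n)⁻¹) (sphere 0 r) :=
    (continuous_pow n).continuousOn.inv₀ fun z hz ↦
      pow_ne_zero n (ne_of_mem_sphere hz hr.ne')
  calc iteratedDeriv n p 0 / n !
      = circleAverage (fun z ↦ (z ^ n)⁻¹ * p z) 0 r
        + circleAverage (fun z ↦ (z ^ n)⁻¹ * conj (p z)) 0 r := by
        rw [circleAverage_inv_pow_mul_eq_iteratedDeriv hr hp,
          circleAverage_inv_pow_mul_conj_eq_zero hr hp hn, add_zero]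
    _ = circleAverage (fun z ↦ (z ^ n)⁻¹ * (2 * ((p z).re : ℂ))) 0 r := by
        rw [← circleAverage_fun_add (f₁ := fun z ↦ (z ^ n)⁻¹ * p z)
          (f₂ := fun z ↦ (z ^ n)⁻¹ * conj (p z)) ((hpow.mul hcont).circleIntegrable hr.le)
          ((hpow.mul (continuous_conj.comp_continuousOn hcont)).circleIntegrable hr.le)]
        congr! 2 with z
        rw [← mul_add, add_conj]
        push_cast
        ring

theorem norm_iteratedDeriv_mul_pow_le_of_re_nonneg_on_sphere (hr : 0 < r)
    (hp : DifferentiableOn ℂ p (closedBall 0 r)) (hre : ∀ z ∈ sphere (0 : ℂ) r, 0 ≤ (p z).re)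
    {n : ℕ} (hn : n ≠ 0) :
    ‖iteratedDeriv n p 0‖ * r ^ n ≤ 2 * n ! * (p 0).re := by
  have hmean : circleAverage (fun z ↦ (p z).re) 0 r = (p 0).re := by
    have hcomm := reCLM.circleAverage_comp_comm
      ((hp.continuousOn.mono sphere_subset_closedBall).circleIntegrable hr.le)
    simp only [Function.comp_def, reCLM_apply] at hcomm
    rw [hcomm, (hp.diffContOnCl_ball (by rw [abs_of_pos hr])).circleAverage]
  have hbound : ‖iteratedDeriv n p 0 / (n ! : ℂ)‖ ≤ 2 / r ^ n * (p 0).re := by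
    calc ‖iteratedDeriv n p 0 / (n ! : ℂ)‖
        ≤ circleAverage (fun z ↦ ‖(z ^ n)⁻¹ * (2 * ((p z).re : ℂ))‖) 0 r := by
          rw [iteratedDeriv_div_factorial_eq_circleAverage_re hr hp hn]
          exact norm_circleAverage_le _ _ _
      _ = circleAverage (fun z ↦ (2 / r ^ n) • (p z).re) 0 r := by
          apply circleAverage_congr_sphere
          intro z hz
          rw [mem_sphere_zero_iff_norm, abs_of_pos hr] at hz
          simp only [norm_mul, norm_inv, norm_pow, hz, Complex.norm_real, Complex.norm_two,
            Real.norm_of_nonneg (hre z (by simpa [abs_of_pos hr] using hz)), smul_eq_mul]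
          ring
      _ = 2 / r ^ n * (p 0).re := by rw [circleAverage_fun_smul, hmean, smul_eq_mul]
  rw [norm_div, Complex.norm_natCast, div_le_iff₀ (by positivity)] at hbound
  calc ‖iteratedDeriv n p 0‖ * r ^ n ≤ 2 / r ^ n * (p 0).re * n ! * r ^ n := by gcongr
    _ = 2 * n ! * (p 0).re := by field_simp

theorem norm_iteratedDeriv_mul_pow_le_of_re_nonneg {R : ℝ} (hR : 0 < R)
    (hp : DifferentiableOn ℂ p (ball 0 R)) (hre : ∀ z ∈ ball (0 : ℂ) R, 0 ≤ (p z).re)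
    {n : ℕ} (hn : n ≠ 0) :
    ‖iteratedDeriv n p 0‖ * R ^ n ≤ 2 * n ! * (p 0).re := by
  have hlim : Tendsto (fun r ↦ ‖iteratedDeriv n p 0‖ * r ^ n) (𝓝[<] R)
      (𝓝 (‖iteratedDeriv n p 0‖ * R ^ n)) :=
    ((continuous_const.mul (continuous_pow n)).tendsto R).mono_left nhdsWithin_le_nhds
  refine le_of_tendsto hlim ?_
  filter_upwards [Ioo_mem_nhdsLT hR] with r ⟨hr0, hrR⟩
  have hsub : closedBall (0 : ℂ) r ⊆ ball 0 R := closedBall_subset_ball hrR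
  exact norm_iteratedDeriv_mul_pow_le_of_re_nonneg_on_sphere hr0 (hp.mono hsub)
    (fun z hz ↦ hre z (hsub (sphere_subset_closedBall hz))) hn

end Caratheodory

theorem Filter.EventuallyEq.eventuallyEq_of_hasDerivAt {𝕜 F : Type*}
    [NontriviallyNormedField 𝕜] [NormedAddCommGroup F] [NormedSpace 𝕜 F] {u v u' v' : 𝕜 → F} {a : 𝕜}
    (h : u =ᶠ[𝓝 a] v) (hu : ∀ᶠ w in 𝓝 a, HasDerivAt u (u' w) w)
    (hv : ∀ᶠ w in 𝓝 a, HasDerivAt v (v' w) w) : u' =ᶠ[𝓝 a] v' := by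
  filter_upwards [h.eventuallyEq_nhds, hu, hv] with w hw huw hvw
  exact huw.unique (hvw.congr_of_eventuallyEq hw)

section LocalInverse

variable {𝕜 : Type*} [NontriviallyNormedField 𝕜] [CompleteSpace 𝕜] {f g : 𝕜 → 𝕜} {a : 𝕜}

theorem AnalyticAt.eventually_hasDerivAt (hg : AnalyticAt 𝕜 g a) :
    ∀ᶠ w in 𝓝 a, HasDerivAt g (deriv g w) w := by
  filter_upwards [hg.eventually_analyticAt] with w hgw
  exact hgw.differentiableAt.hasDerivAt

theorem AnalyticAt.eventually_hasDerivAt_comp (hf : AnalyticAt 𝕜 f (g a))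
    (hg : AnalyticAt 𝕜 g a) :
    ∀ᶠ w in 𝓝 a, HasDerivAt (fun w ↦ f (g w)) (deriv f (g w) * deriv g w) w := by
  filter_upwards [hg.continuousAt.tendsto.eventually hf.eventually_analyticAt,
    hg.eventually_hasDerivAt] with w hfw hgw
  exact hfw.differentiableAt.hasDerivAt.comp w hgw

variable (hf : AnalyticAt 𝕜 f (g a)) (hg : AnalyticAt 𝕜 g a) (hfg : ∀ᶠ w in 𝓝 a, f (g w) = w)
include hf hg hfg

theorem eventually_deriv_comp_mul_deriv_eq_one :
    ∀ᶠ w in 𝓝 a, deriv f (g w) * deriv g w = 1 :=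
  EventuallyEq.eventuallyEq_of_hasDerivAt (v := id) hfg (hf.eventually_hasDerivAt_comp hg)
    (Eventually.of_forall fun w ↦ hasDerivAt_id w)

theorem eventually_deriv_deriv_comp_mul_sq_add_eq_zero :
    ∀ᶠ w in 𝓝 a,
      deriv (deriv f) (g w) * deriv g w ^ 2 + deriv f (g w) * deriv (deriv g) w = 0 := by
  refine EventuallyEq.eventuallyEq_of_hasDerivAt (v := fun _ ↦ 1)
    (eventually_deriv_comp_mul_deriv_eq_one hf hg hfg) ?_
    (Eventually.of_forall fun w ↦ hasDerivAt_const w 1)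
  filter_upwards [hf.deriv.eventually_hasDerivAt_comp hg, hg.deriv.eventually_hasDerivAt]
    with w hf'g hg'
  exact (hf'g.mul hg').congr_deriv (by ring)

theorem deriv_deriv_deriv_comp_mul_pow_three_add_eq_zero :
    deriv (deriv (deriv f)) (g a) * deriv g a ^ 3
      + 3 * deriv (deriv f) (g a) * deriv g a * deriv (deriv g) a
      + deriv f (g a) * deriv (deriv (deriv g)) a = 0 := by
  refine EventuallyEq.eq_of_nhds (EventuallyEq.eventuallyEq_of_hasDerivAt
    (u' := fun w ↦ deriv (deriv (deriv f)) (g w) * deriv g w ^ 3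
      + 3 * deriv (deriv f) (g w) * deriv g w * deriv (deriv g) w
      + deriv f (g w) * deriv (deriv (deriv g)) w) (v := fun _ ↦ 0)
    (eventually_deriv_deriv_comp_mul_sq_add_eq_zero hf hg hfg) ?_
    (Eventually.of_forall fun w ↦ hasDerivAt_const w 0))
  filter_upwards [hf.deriv.deriv.eventually_hasDerivAt_comp hg,
    hf.deriv.eventually_hasDerivAt_comp hg, hg.deriv.eventually_hasDerivAt,
    hg.deriv.deriv.eventually_hasDerivAt] with w hf''g hf'g hg' hg''
  exact ((hf''g.mul (hg'.pow 2)).add (hf'g.mul hg'')).congr_deriv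
    (by simp only [Pi.pow_apply]; ring)

theorem deriv_eq_one_of_comp_eq_id (hf1 : deriv f (g a) = 1) : deriv g a = 1 := by
  simpa [hf1] using (eventually_deriv_comp_mul_deriv_eq_one hf hg hfg).self_of_nhds

theorem iteratedDeriv_three_add_iteratedDeriv_three_of_comp_eq_id (hf1 : deriv f (g a) = 1) :
    iteratedDeriv 3 f (g a) + iteratedDeriv 3 g a = 3 * iteratedDeriv 2 f (g a) ^ 2 := by
  have hg1 := deriv_eq_one_of_comp_eq_id hf hg hfg hf1
  have h2 := (eventually_deriv_deriv_comp_mul_sq_add_eq_zero hf hg hfg).self_of_nhds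
  have h3 := deriv_deriv_deriv_comp_mul_pow_three_add_eq_zero hf hg hfg
  rw [hg1, hf1] at h2 h3
  simp only [iteratedDeriv_succ, iteratedDeriv_zero]
  linear_combination h3 - 3 * deriv (deriv f) (g a) * h2

end LocalInverse

theorem norm_mul_norm_iteratedDeriv_three_le {h : ℂ → ℂ}
    (hh : DifferentiableOn ℂ h (ball 0 1)) {k : ℂ} {m : ℝ}
    (hre : ∀ z ∈ ball (0 : ℂ) 1, m < (k * deriv h z).re) :
    ‖k‖ * ‖iteratedDeriv 3 h 0‖ ≤ 4 * ((k * deriv h 0).re - m) := by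
  have hcara := norm_iteratedDeriv_mul_pow_le_of_re_nonneg one_pos
    (p := fun z ↦ -(m : ℂ) + k * deriv h z)
    ((hh.deriv isOpen_ball).const_mul k |>.const_add _)
    (fun z hz ↦ by simpa using (hre z hz).le) two_ne_zero
  rw [iteratedDeriv_const_add two_pos, iteratedDeriv_const_mul_field, ← iteratedDeriv_succ',
    norm_mul, one_pow, mul_one, Nat.factorial_two, add_re, neg_re, ofReal_re] at hcara
  simp only [Nat.reduceAdd, Nat.cast_ofNat] at hcara
  linarith

theorem norm_iteratedDeriv_three_le_of_lt_re_exp_mul_deriv {h : ℂ → ℂ}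
    (hh : DifferentiableOn ℂ h (ball 0 1)) (h1 : deriv h 0 = 1) {α β : ℝ}
    (hre : ∀ z ∈ ball (0 : ℂ) 1, α * Real.cos β < (exp (I * β) * deriv h z).re) :
    ‖iteratedDeriv 3 h 0‖ ≤ 4 * ((1 - α) * Real.cos β) := by
  have hbound := norm_mul_norm_iteratedDeriv_three_le hh hre
  rw [norm_exp_I_mul_ofReal, one_mul, h1, mul_one, mul_comm I, exp_ofReal_mul_I_re] at hbound
  linarith

theorem coeff_bounds_NP_one_one_general
    (α β : ℝ)
    (f g : ℂ → ℂ)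
    -- `f` is bi-univalent with inverse extension `g`.
    (hf_an : AnalyticOnNhd ℂ f (ball 0 1)) (hf1 : deriv f 0 = 1)
    (hg_an : AnalyticOnNhd ℂ g (ball 0 1))
    (hg0 : g 0 = 0) (hfg : ∀ᶠ w in nhds (0 : ℂ), f (g w) = w)
    -- real-part condition for `f`
    (hre_f : ∀ z ∈ ball (0 : ℂ) 1,
      α * Real.cos β < (Complex.exp (Complex.I * β) * deriv f z).re)
    -- real-part condition for `g`
    (hre_g : ∀ w ∈ ball (0 : ℂ) 1,
      α * Real.cos β < (Complex.exp (Complex.I * β) * deriv g w).re) :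
    ‖iteratedDeriv 2 f 0 / 2‖ ≤ Real.sqrt (2 * (1 - α) * Real.cos β / 3) ∧
    ‖iteratedDeriv 3 f 0 / 6‖ ≤ 2 * (1 - α) * Real.cos β / 3 := by
  have hf_at : AnalyticAt ℂ f (g 0) := by rw [hg0]; exact hf_an 0 (mem_ball_self one_pos)
  have hg_at : AnalyticAt ℂ g 0 := hg_an 0 (mem_ball_self one_pos)
  have hf1' : deriv f (g 0) = 1 := by rwa [hg0]
  have hg1 : deriv g 0 = 1 := deriv_eq_one_of_comp_eq_id hf_at hg_at hfg hf1'
  have hsum := iteratedDeriv_three_add_iteratedDeriv_three_of_comp_eq_id hf_at hg_at hfg hf1'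
  rw [hg0] at hsum
  have hf3 :=
    norm_iteratedDeriv_three_le_of_lt_re_exp_mul_deriv hf_an.differentiableOn hf1 hre_f
  have hg3 :=
    norm_iteratedDeriv_three_le_of_lt_re_exp_mul_deriv hg_an.differentiableOn hg1 hre_g
  have hf2 : 3 * ‖iteratedDeriv 2 f 0‖ ^ 2 ≤ 8 * ((1 - α) * Real.cos β) :=
    calc 3 * ‖iteratedDeriv 2 f 0‖ ^ 2 = ‖iteratedDeriv 3 f 0 + iteratedDeriv 3 g 0‖ := by
          rw [hsum, norm_mul, norm_pow]; norm_num
      _ ≤ 8 * ((1 - α) * Real.cos β) := by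
          linarith [norm_add_le (iteratedDeriv 3 f 0) (iteratedDeriv 3 g 0)]
  constructor
  · refine Real.le_sqrt_of_sq_le ?_
    rw [norm_div, div_pow]
    norm_num
    linarith
  · rw [norm_div]
    norm_num
    linarith

/-- Coefficient bounds for the class `NP^{1,1}_Σ(β,α)`. -/
theorem coeff_bounds_NP_one_one
    (α β : ℝ) (hα0 : 0 ≤ α) (hα1 : α < 1)
    (hβ : β ∈ Set.Ioo (-(π / 2)) (π / 2))
    (f g : ℂ → ℂ)
    -- `f` is bi-univalent with inverse extension `g`.
    (hf_an : AnalyticOnNhd ℂ f (ball 0 1)) (hf0 : f 0 = 0) (hf1 : deriv f 0 = 1)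
    (hf_inj : Set.InjOn f (ball 0 1))
    (hg_an : AnalyticOnNhd ℂ g (ball 0 1)) (hg_inj : Set.InjOn g (ball 0 1))
    (hg0 : g 0 = 0) (hfg : ∀ᶠ w in nhds (0 : ℂ), f (g w) = w)
    -- real-part condition for `f`
    (hre_f : ∀ z ∈ ball (0 : ℂ) 1,
      α * Real.cos β < (Complex.exp (Complex.I * β) * deriv f z).re)
    -- real-part condition for `g`
    (hre_g : ∀ w ∈ ball (0 : ℂ) 1,
      α * Real.cos β < (Complex.exp (Complex.I * β) * deriv g w).re) :
    ‖iteratedDeriv 2 f 0 / 2‖ ≤ Real.sqrt (2 * (1 - α) * Real.cos β / 3) ∧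
    ‖iteratedDeriv 3 f 0 / 6‖ ≤ 2 * (1 - α) * Real.cos β / 3 :=
  coeff_bounds_NP_one_one_general α β f g hf_an hf1 hg_an hg0 hfg hre_f hre_g
end

section
/- Let β ∈ (−π/2, π/2), λ ≥ 1, μ ≥ 0, let f ∈ Σ with inverse extension g, and let p, q be analytic on U with p(0) = q(0) = 1 such that e^{iβ}((1−λ)(f(z)/z)^μ + λ f'(z)(f(z)/z)^{μ−1}) = p(z)·cos β + i·sin β for all z ∈ U \ {0} and e^{iβ}((1−λ)(g(w)/w)^μ + λ g'(w)(g(w)/w)^{μ−1}) = q(w)·cos β + i·sin β for all w ∈ U \ {0}. Then, writing a₂ = f''(0)/2, p₂ = p''(0)/2, q₂ = q''(0)/2, one has a₂² = e^{−iβ}(p₂ + q₂)·cos β / ((1+μ)(2λ+μ)). -/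
/-!
Write `f z = z * h z` with `h = dslope f 0`. Off the origin the left-hand side becomes
`h ^ (μ - 1) * (h + λ z h')`, which is analytic at `0` because `h 0 = 1`; by Leibniz and
Faà di Bruno its second Taylor coefficient is `(μ + 2λ) (a₃ + (μ - 1) a₂² / 2)`. The inverse `g`
has coefficients `-a₂` and `2a₂² - a₃` (differentiate `f ∘ g = id`), so adding the relations
for `f` and `g` eliminates `a₃`.
-/

open Metric Real Complex Filter Topology

section OneDimensional

variable {𝕜 : Type*} [NontriviallyNormedField 𝕜] {f g : 𝕜 → 𝕜} {a : 𝕜}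

theorem deriv_eq_one_of_comp_eventuallyEq_id (hf : DifferentiableAt 𝕜 f (g a))
    (hg : DifferentiableAt 𝕜 g a) (hf1 : deriv f (g a) = 1) (hfg : ∀ᶠ w in 𝓝 a, f (g w) = w) :
    deriv g a = 1 := by
  have h := (show f ∘ g =ᶠ[𝓝 a] id from hfg).deriv_eq
  rwa [deriv_comp a hf hg, deriv_id, hf1, one_mul] at h

theorem iteratedDeriv_two_eq_neg_of_comp_eventuallyEq_id (hf : ContDiffAt 𝕜 2 f (g a))
    (hg : ContDiffAt 𝕜 2 g a) (hf1 : deriv f (g a) = 1) (hfg : ∀ᶠ w in 𝓝 a, f (g w) = w) :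
    iteratedDeriv 2 g a = -iteratedDeriv 2 f (g a) := by
  have hg1 := deriv_eq_one_of_comp_eventuallyEq_id (hf.differentiableAt (by norm_num))
    (hg.differentiableAt (by norm_num)) hf1 hfg
  have h := (show f ∘ g =ᶠ[𝓝 a] id from hfg).iteratedDeriv_eq 2
  rw [iteratedDeriv_comp_two hf hg, hf1, hg1, iteratedDeriv_id] at h
  norm_num at h
  linear_combination h

theorem iteratedDeriv_three_of_comp_eventuallyEq_id (hf : ContDiffAt 𝕜 3 f (g a))
    (hg : ContDiffAt 𝕜 3 g a) (hf1 : deriv f (g a) = 1) (hfg : ∀ᶠ w in 𝓝 a, f (g w) = w) :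
    iteratedDeriv 3 g a = 3 * iteratedDeriv 2 f (g a) ^ 2 - iteratedDeriv 3 f (g a) := by
  have hg1 := deriv_eq_one_of_comp_eventuallyEq_id (hf.differentiableAt (by norm_num))
    (hg.differentiableAt (by norm_num)) hf1 hfg
  have hg2 := iteratedDeriv_two_eq_neg_of_comp_eventuallyEq_id (hf.of_le (by norm_num))
    (hg.of_le (by norm_num)) hf1 hfg
  have h := (show f ∘ g =ᶠ[𝓝 a] id from hfg).iteratedDeriv_eq 3
  rw [iteratedDeriv_comp_three hf hg, hf1, hg1, hg2, iteratedDeriv_id] at h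
  norm_num at h
  linear_combination h

theorem iteratedDeriv_succ_mul_id_zero {H : 𝕜 → 𝕜} {n : ℕ} (hH : ContDiffAt 𝕜 (n + 1) H 0) :
    iteratedDeriv (n + 1) (fun z => z * H z) 0 = (n + 1) * iteratedDeriv n H 0 := by
  rw [iteratedDeriv_fun_mul contDiffAt_fun_id hH, Finset.sum_eq_single 1]
  · simp
  · intro i _ hi
    simp [iteratedDeriv_fun_id_zero, hi]
  · simp

end OneDimensional

theorem iteratedDeriv_two_cpow_const_one (c : ℂ) :
    iteratedDeriv 2 (fun w : ℂ => w ^ c) 1 = c * (c - 1) := by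
  have hderiv : deriv (fun w : ℂ => w ^ c) =ᶠ[𝓝 1] fun w => c * w ^ (c - 1) := by
    filter_upwards [isOpen_slitPlane.mem_nhds one_mem_slitPlane] with w hw
    exact Complex.deriv_cpow_const hw
  rw [iteratedDeriv_succ, iteratedDeriv_one, hderiv.deriv_eq,
    ((hasStrictDerivAt_cpow_const one_mem_slitPlane).hasDerivAt.const_mul c).deriv]
  simp

theorem iteratedDeriv_two_cpow_mul_zero {H : ℂ → ℂ} (hH : AnalyticAt ℂ H 0) (hH0 : H 0 = 1)
    (c lam : ℂ) :
    iteratedDeriv 2 (fun z => H z ^ c * (H z + lam * (z * deriv H z))) 0 =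
      (c + 1 + 2 * lam) * (iteratedDeriv 2 H 0 + c * deriv H 0 ^ 2) := by
  have hslit : H 0 ∈ slitPlane := hH0 ▸ one_mem_slitPlane
  have hK : AnalyticAt ℂ (fun z => H z ^ c) 0 := hH.cpow analyticAt_const hslit
  have hL : AnalyticAt ℂ (fun z => z * deriv H z) 0 := analyticAt_id.mul hH.deriv
  have hcL : AnalyticAt ℂ (fun z => lam * (z * deriv H z)) 0 := analyticAt_const.mul hL
  have hM : AnalyticAt ℂ (fun z => H z + lam * (z * deriv H z)) 0 := hH.add hcL
  have hdK : deriv (fun z => H z ^ c) 0 = c * deriv H 0 := by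
    rw [deriv_cpow_const hH.differentiableAt hslit, hH0, one_cpow, mul_one]
  have hd2K : iteratedDeriv 2 (fun z => H z ^ c) 0 =
      c * (c - 1) * deriv H 0 ^ 2 + c * iteratedDeriv 2 H 0 := by
    have hpow : AnalyticAt ℂ (fun w : ℂ => w ^ c) (H 0) :=
      analyticAt_id.cpow analyticAt_const hslit
    have h := iteratedDeriv_comp_two hpow.contDiffAt hH.contDiffAt
    rwa [hH0, iteratedDeriv_two_cpow_const_one, Complex.deriv_cpow_const one_mem_slitPlane,
      one_cpow, mul_one] at h
  have hdL : deriv (fun z => z * deriv H z) 0 = deriv H 0 := by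
    simpa using iteratedDeriv_succ_mul_id_zero (n := 0) hH.deriv.contDiffAt
  have hd2L : iteratedDeriv 2 (fun z => z * deriv H z) 0 = 2 * iteratedDeriv 2 H 0 := by
    rw [iteratedDeriv_succ' (n := 1) (f := H)]
    convert iteratedDeriv_succ_mul_id_zero (n := 1) hH.deriv.contDiffAt using 1
    norm_num
  have hdM : deriv (fun z => H z + lam * (z * deriv H z)) 0 = deriv H 0 + lam * deriv H 0 := by
    rw [deriv_fun_add hH.differentiableAt hcL.differentiableAt,
      deriv_const_mul _ hL.differentiableAt, hdL]
  have hd2M : iteratedDeriv 2 (fun z => H z + lam * (z * deriv H z)) 0 =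
      iteratedDeriv 2 H 0 + lam * (2 * iteratedDeriv 2 H 0) := by
    rw [iteratedDeriv_fun_add hH.contDiffAt hcL.contDiffAt, iteratedDeriv_const_mul_field, hd2L]
  rw [iteratedDeriv_fun_mul hK.contDiffAt hM.contDiffAt]
  simp only [Finset.sum_range_succ, Finset.sum_range_zero, Nat.reduceSub, Nat.choose_zero_right,
    Nat.choose_self, Nat.choose_one_right, Nat.cast_one, Nat.cast_ofNat, iteratedDeriv_zero,
    iteratedDeriv_one, hdK, hd2K, hdM, hd2M, hH0, one_cpow]
  ring

noncomputable def bazilevicExpr (lam μ : ℂ) (F : ℂ → ℂ) (z : ℂ) : ℂ :=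
  (1 - lam) * (F z / z) ^ μ + lam * deriv F z * (F z / z) ^ (μ - 1)

theorem bazilevicExpr_eq_of_eq_mul {lam μ z : ℂ} {F H : ℂ → ℂ} (hFH : ∀ w, F w = w * H w)
    (hH : DifferentiableAt ℂ H z) (hz : z ≠ 0) (hHz : H z ≠ 0) :
    bazilevicExpr lam μ F z = H z ^ (μ - 1) * (H z + lam * (z * deriv H z)) := by
  have hquot : F z / z = H z := by rw [hFH, mul_div_cancel_left₀ _ hz]
  have hderiv : deriv F z = H z + z * deriv H z := by
    rw [funext hFH, deriv_fun_mul differentiableAt_fun_id hH, deriv_id'', one_mul]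
  have hpow : H z ^ μ = H z ^ (μ - 1) * H z := by
    conv_lhs => rw [← sub_add_cancel μ 1, cpow_add _ _ hHz, cpow_one]
  rw [bazilevicExpr, hquot, hderiv, hpow]
  ring

theorem iteratedDeriv_two_eq_of_bazilevicExpr_eq {lam μ : ℂ} {F P : ℂ → ℂ}
    (hF : AnalyticAt ℂ F 0) (hF0 : F 0 = 0) (hF1 : deriv F 0 = 1) (hP : ContinuousAt P 0)
    (heq : ∀ᶠ z in 𝓝[≠] 0, bazilevicExpr lam μ F z = P z) :
    iteratedDeriv 2 P 0 =
      (μ + 2 * lam) * (iteratedDeriv 3 F 0 / 3 + (μ - 1) * (iteratedDeriv 2 F 0 / 2) ^ 2) := by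
  set H := dslope F 0
  have hFH : ∀ w, F w = w * H w := fun w => by
    simpa [hF0] using (sub_smul_dslope F 0 w).symm
  have hH : AnalyticAt ℂ H 0 := by
    obtain ⟨p, hp⟩ := hF
    exact hp.has_fpower_series_dslope_fslope.analyticAt
  have hH0 : H 0 = 1 := by simp [H, dslope_same, hF1]
  have hE : AnalyticAt ℂ (fun z => H z ^ (μ - 1) * (H z + lam * (z * deriv H z))) 0 :=
    (hH.cpow analyticAt_const (hH0 ▸ one_mem_slitPlane)).mul
      (hH.add (analyticAt_const.mul (analyticAt_id.mul hH.deriv)))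
  have hEP : (fun z => H z ^ (μ - 1) * (H z + lam * (z * deriv H z))) =ᶠ[𝓝 0] P := by
    refine (hE.continuousAt.eventuallyEq_nhds_iff_eventuallyEq_nhdsNE hP).mp ?_
    have hHne : ∀ᶠ z in 𝓝 0, H z ≠ 0 := hH.continuousAt.eventually_ne (by simp [hH0])
    filter_upwards [heq, self_mem_nhdsWithin, nhdsWithin_le_nhds hH.eventually_analyticAt,
      nhdsWithin_le_nhds hHne] with z hz hz0 hHz hHz0
    rw [← hz, bazilevicExpr_eq_of_eq_mul hFH hHz.differentiableAt hz0 hHz0]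
  have hF2 : iteratedDeriv 2 F 0 = 2 * deriv H 0 := by
    rw [funext hFH]
    simpa [one_add_one_eq_two] using iteratedDeriv_succ_mul_id_zero (n := 1) hH.contDiffAt
  have hF3 : iteratedDeriv 3 F 0 = 3 * iteratedDeriv 2 H 0 := by
    rw [funext hFH]
    convert iteratedDeriv_succ_mul_id_zero (n := 2) hH.contDiffAt using 1
    norm_num
  rw [← hEP.iteratedDeriv_eq, iteratedDeriv_two_cpow_mul_zero hH hH0, hF2, hF3]
  ring

theorem iteratedDeriv_two_eq_of_rotated_bazilevicExpr_eq {lam μ : ℂ} {β : ℝ} {F p : ℂ → ℂ}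
    (hF : AnalyticAt ℂ F 0) (hF0 : F 0 = 0) (hF1 : deriv F 0 = 1) (hp : ContinuousAt p 0)
    (heq : ∀ᶠ z in 𝓝[≠] 0,
      exp (I * β) * bazilevicExpr lam μ F z = p z * (Real.cos β : ℂ) + I * (Real.sin β : ℂ)) :
    exp (-(I * β)) * Real.cos β * iteratedDeriv 2 p 0 =
      (μ + 2 * lam) * (iteratedDeriv 3 F 0 / 3 + (μ - 1) * (iteratedDeriv 2 F 0 / 2) ^ 2) := by
  set e := exp (-(I * β))
  have hP : ContinuousAt (fun z => e * (I * Real.sin β) + e * Real.cos β * p z) 0 := by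
    fun_prop
  rw [← iteratedDeriv_two_eq_of_bazilevicExpr_eq hF hF0 hF1 hP, iteratedDeriv_const_add two_pos,
    iteratedDeriv_const_mul_field]
  filter_upwards [heq] with z hz
  have he : e * exp (I * β) = 1 := by rw [← Complex.exp_add, neg_add_cancel, Complex.exp_zero]
  linear_combination e * hz - bazilevicExpr lam μ F z * he

theorem coeff_relation_a2_sq_general
    (β lam μ : ℝ) (hlam : 1 ≤ lam) (hμ : 0 ≤ μ)
    (f g p q : ℂ → ℂ)
    -- `f` is bi-univalent with inverse extension `g`.
    (hf_an : AnalyticOnNhd ℂ f (ball 0 1)) (hf0 : f 0 = 0) (hf1 : deriv f 0 = 1)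
    (hg_an : AnalyticOnNhd ℂ g (ball 0 1))
    (hg0 : g 0 = 0) (hfg : ∀ᶠ w in nhds (0 : ℂ), f (g w) = w)
    (hp_an : AnalyticOnNhd ℂ p (ball 0 1))
    (hq_an : AnalyticOnNhd ℂ q (ball 0 1))
    (heq_p : ∀ z ∈ ball (0 : ℂ) 1, z ≠ 0 →
      Complex.exp (Complex.I * β) *
        ((1 - (lam : ℂ)) * (f z / z) ^ (μ : ℂ) +
          (lam : ℂ) * deriv f z * (f z / z) ^ ((μ : ℂ) - 1))
      = p z * (Real.cos β : ℂ) + Complex.I * (Real.sin β : ℂ))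
    (heq_q : ∀ w ∈ ball (0 : ℂ) 1, w ≠ 0 →
      Complex.exp (Complex.I * β) *
        ((1 - (lam : ℂ)) * (g w / w) ^ (μ : ℂ) +
          (lam : ℂ) * deriv g w * (g w / w) ^ ((μ : ℂ) - 1))
      = q w * (Real.cos β : ℂ) + Complex.I * (Real.sin β : ℂ)) :
    (iteratedDeriv 2 f 0 / 2) ^ 2 =
      Complex.exp (-(Complex.I * β)) * (iteratedDeriv 2 p 0 / 2 + iteratedDeriv 2 q 0 / 2) *
        (Real.cos β : ℂ) / ((1 + (μ : ℂ)) * (2 * (lam : ℂ) + (μ : ℂ))) := by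
  have h0 : (0 : ℂ) ∈ ball (0 : ℂ) 1 := mem_ball_self one_pos
  have hball : ∀ᶠ z in 𝓝[≠] (0 : ℂ), z ∈ ball (0 : ℂ) 1 ∧ z ≠ 0 :=
    (eventually_nhdsWithin_of_eventually_nhds (isOpen_ball.mem_nhds h0)).and
      self_mem_nhdsWithin
  have hf := hf_an 0 h0
  have hg := hg_an 0 h0
  have hfg0 : AnalyticAt ℂ f (g 0) := by rwa [hg0]
  have hf1g : deriv f (g 0) = 1 := by rwa [hg0]
  have hg1 := deriv_eq_one_of_comp_eventuallyEq_id hfg0.differentiableAt hg.differentiableAt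
    hf1g hfg
  have hg2 := iteratedDeriv_two_eq_neg_of_comp_eventuallyEq_id hfg0.contDiffAt hg.contDiffAt
    hf1g hfg
  have hg3 := iteratedDeriv_three_of_comp_eventuallyEq_id hfg0.contDiffAt hg.contDiffAt
    hf1g hfg
  have hP := iteratedDeriv_two_eq_of_rotated_bazilevicExpr_eq hf hf0 hf1 (hp_an 0 h0).continuousAt
    (hball.mono fun z hz => heq_p z hz.1 hz.2)
  have hQ := iteratedDeriv_two_eq_of_rotated_bazilevicExpr_eq hg hg0 hg1 (hq_an 0 h0).continuousAt
    (hball.mono fun z hz => heq_q z hz.1 hz.2)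
  rw [hg2, hg3, hg0] at hQ
  have hden : (1 + (μ : ℂ)) * (2 * (lam : ℂ) + (μ : ℂ)) ≠ 0 := by
    exact_mod_cast (show 0 < (1 + μ) * (2 * lam + μ) by positivity).ne'
  rw [eq_div_iff hden]
  linear_combination -(hP + hQ) / 2

/-- For `f` in the class `NP^{μ,λ}_Σ(β,h)` with associated functions `p` and `q`,
one has `a₂² = e^{−iβ}(p₂+q₂)cos β / ((1+μ)(2λ+μ))`. -/
theorem coeff_relation_a2_sq
    (β lam μ : ℝ) (hβ : β ∈ Set.Ioo (-(π / 2)) (π / 2)) (hlam : 1 ≤ lam) (hμ : 0 ≤ μ)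
    (f g p q : ℂ → ℂ)
    -- `f` is bi-univalent with inverse extension `g`.
    (hf_an : AnalyticOnNhd ℂ f (ball 0 1)) (hf0 : f 0 = 0) (hf1 : deriv f 0 = 1)
    (hf_inj : Set.InjOn f (ball 0 1))
    (hg_an : AnalyticOnNhd ℂ g (ball 0 1)) (hg_inj : Set.InjOn g (ball 0 1))
    (hg0 : g 0 = 0) (hfg : ∀ᶠ w in nhds (0 : ℂ), f (g w) = w)
    (hp_an : AnalyticOnNhd ℂ p (ball 0 1)) (hp0 : p 0 = 1)
    (hq_an : AnalyticOnNhd ℂ q (ball 0 1)) (hq0 : q 0 = 1)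
    (heq_p : ∀ z ∈ ball (0 : ℂ) 1, z ≠ 0 →
      Complex.exp (Complex.I * β) *
        ((1 - (lam : ℂ)) * (f z / z) ^ (μ : ℂ) +
          (lam : ℂ) * deriv f z * (f z / z) ^ ((μ : ℂ) - 1))
      = p z * (Real.cos β : ℂ) + Complex.I * (Real.sin β : ℂ))
    (heq_q : ∀ w ∈ ball (0 : ℂ) 1, w ≠ 0 →
      Complex.exp (Complex.I * β) *
        ((1 - (lam : ℂ)) * (g w / w) ^ (μ : ℂ) +
          (lam : ℂ) * deriv g w * (g w / w) ^ ((μ : ℂ) - 1))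
      = q w * (Real.cos β : ℂ) + Complex.I * (Real.sin β : ℂ)) :
    (iteratedDeriv 2 f 0 / 2) ^ 2 =
      Complex.exp (-(Complex.I * β)) * (iteratedDeriv 2 p 0 / 2 + iteratedDeriv 2 q 0 / 2) *
        (Real.cos β : ℂ) / ((1 + (μ : ℂ)) * (2 * (lam : ℂ) + (μ : ℂ))) :=
  coeff_relation_a2_sq_general β lam μ hlam hμ f g p q hf_an hf0 hf1 hg_an hg0 hfg hp_an hq_an heq_p
    heq_q
end

section
/- Let β ∈ (−π/2, π/2), λ ≥ 1, μ ≥ 0, let f ∈ Σ with inverse extension g, and let p, q be analytic on U with p(0) = q(0) = 1 such that e^{iβ}((1−λ)(f(z)/z)^μ + λ f'(z)(f(z)/z)^{μ−1}) = p(z)·cos β + i·sin β for all z ∈ U \ {0} and e^{iβ}((1−λ)(g(w)/w)^μ + λ g'(w)(g(w)/w)^{μ−1}) = q(w)·cos β + i·sin β for all w ∈ U \ {0}. Then, writing a₃ = f'''(0)/6, p₂ = p''(0)/2, q₂ = q''(0)/2, one has a₃ = e^{−iβ}(p₂ + q₂)·cos β / ((1+μ)(2λ+μ)) + e^{−iβ}(p₂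 − q₂)·cos β / (2(2λ+μ)). -/
open Metric Real Complex Filter Topology

/-!
Write `f z = z h(z)` with `h(0) = 1`. Near `0` the defining identity for `p` says
`e^{-iβ}(p cos β + i sin β) = (1 - λ) h^μ + λ f' h^(μ-1)`, and comparing second derivatives at `0`
gives `e^{-iβ} cos β p₂ = (2λ + μ)(a₃ + (μ - 1) a₂² / 2)`. Differentiating `f ∘ g = id` shows that
the coefficients of `g` are `-a₂` and `2a₂² - a₃`, so the same identity for `q` reads
`e^{-iβ} cos β q₂ = (2λ + μ)(2a₂² - a₃ + (μ - 1) a₂² / 2)`. The sum of the two identities determines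
`a₂²`, and then their difference determines `a₃`.
-/

section
variable {𝕜 : Type*} [NontriviallyNormedField 𝕜] {u v : 𝕜 → 𝕜} {x : 𝕜}

theorem iteratedDeriv_succ_id_mul_zero {n : ℕ} (hu : ContDiffAt 𝕜 (n + 1 : ℕ) u 0) :
    iteratedDeriv (n + 1) (fun z => z * u z) 0 = (n + 1) * iteratedDeriv n u 0 := by
  rw [iteratedDeriv_fun_mul (f := fun z => z) contDiffAt_id hu, Finset.sum_range_succ',
    Finset.sum_range_succ']
  simp [iteratedDeriv_fun_id_zero]

theorem AnalyticAt.deriv_comp_eventuallyEq [CompleteSpace 𝕜] (hu : AnalyticAt 𝕜 u (v x))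
    (hv : AnalyticAt 𝕜 v x) :
    deriv (fun w => u (v w)) =ᶠ[𝓝 x] fun w => deriv u (v w) * deriv v w := by
  filter_upwards [hv.eventually_analyticAt,
    hv.continuousAt.eventually hu.eventually_analyticAt] with w hvw huw
  exact deriv_comp w huw.differentiableAt hvw.differentiableAt

theorem AnalyticAt.exists_eq_id_mul {F : 𝕜 → 𝕜} (hF : AnalyticAt 𝕜 F 0) (hF0 : F 0 = 0) :
    ∃ h : 𝕜 → 𝕜, AnalyticAt 𝕜 h 0 ∧ h 0 = deriv F 0 ∧ F = fun z => z * h z := by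
  obtain ⟨_, hp⟩ := hF
  refine ⟨dslope F 0, hp.has_fpower_series_dslope_fslope.analyticAt, dslope_same F 0, ?_⟩
  funext z
  simpa [hF0] using (sub_smul_dslope F 0 z).symm

end

section
variable {u : ℂ → ℂ} {x : ℂ}

theorem AnalyticAt.deriv_cpow_const_eventuallyEq (hu : AnalyticAt ℂ u x) (hx : u x ∈ slitPlane)
    (c : ℂ) : deriv (fun z => u z ^ c) =ᶠ[𝓝 x] fun z => c * u z ^ (c - 1) * deriv u z := by
  filter_upwards [hu.eventually_analyticAt,
    hu.continuousAt.eventually (isOpen_slitPlane.mem_nhds hx)] with z huz hz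
  exact (huz.differentiableAt.hasDerivAt.cpow_const hz).deriv

theorem AnalyticAt.iteratedDeriv_two_cpow_const (hu : AnalyticAt ℂ u x) (hx : u x ∈ slitPlane)
    (c : ℂ) : iteratedDeriv 2 (fun z => u z ^ c) x =
      c * (c - 1) * u x ^ (c - 2) * deriv u x ^ 2 + c * u x ^ (c - 1) * iteratedDeriv 2 u x := by
  have hd : HasDerivAt (fun z => c * u z ^ (c - 1) * deriv u z)
      (c * ((c - 1) * u x ^ (c - 1 - 1) * deriv u x) * deriv u x +
        c * u x ^ (c - 1) * deriv (deriv u) x) x :=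
    ((hu.differentiableAt.hasDerivAt.cpow_const hx).const_mul c).mul
      hu.deriv.differentiableAt.hasDerivAt
  rw [iteratedDeriv_succ', iteratedDeriv_one, (hu.deriv_cpow_const_eventuallyEq hx c).deriv_eq,
    hd.deriv, iteratedDeriv_succ', iteratedDeriv_one, show c - 1 - 1 = c - 2 by ring]
  ring

end

section LeftInverse
variable {𝕜 : Type*} [NontriviallyNormedField 𝕜] [CompleteSpace 𝕜] {f g : 𝕜 → 𝕜} {x : 𝕜}

theorem deriv_comp_mul_deriv_eventuallyEq_one (hf : AnalyticAt 𝕜 f (g x))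
    (hg : AnalyticAt 𝕜 g x) (hfg : (fun w => f (g w)) =ᶠ[𝓝 x] id) :
    (fun w => deriv f (g w) * deriv g w) =ᶠ[𝓝 x] fun _ => 1 := by
  filter_upwards [(hf.deriv_comp_eventuallyEq hg).symm.trans hfg.deriv] with w hw
  rw [hw, deriv_id]

theorem deriv_deriv_comp_mul_sq_add_eventuallyEq_zero (hf : AnalyticAt 𝕜 f (g x))
    (hg : AnalyticAt 𝕜 g x) (hfg : (fun w => f (g w)) =ᶠ[𝓝 x] id) :
    (fun w => deriv (deriv f) (g w) * deriv g w ^ 2 + deriv f (g w) * deriv (deriv g) w)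
      =ᶠ[𝓝 x] fun _ => 0 := by
  filter_upwards [(deriv_comp_mul_deriv_eventuallyEq_one hf hg hfg).deriv,
    hg.eventually_analyticAt, hg.continuousAt.eventually hf.eventually_analyticAt] with w hw hgw hfw
  have hd : HasDerivAt (fun w => deriv f (g w) * deriv g w)
      (deriv (deriv f) (g w) * deriv g w * deriv g w + deriv f (g w) * deriv (deriv g) w) w :=
    (hfw.deriv.differentiableAt.hasDerivAt.comp w hgw.differentiableAt.hasDerivAt).mul
      hgw.deriv.differentiableAt.hasDerivAt
  rw [hd.deriv, deriv_const] at hw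
  linear_combination hw

theorem deriv_eq_one_of_leftInverse (hf : AnalyticAt 𝕜 f (g x)) (hg : AnalyticAt 𝕜 g x)
    (hfg : (fun w => f (g w)) =ᶠ[𝓝 x] id) (hf1 : deriv f (g x) = 1) : deriv g x = 1 := by
  simpa [hf1] using (deriv_comp_mul_deriv_eventuallyEq_one hf hg hfg).eq_of_nhds

theorem iteratedDeriv_two_of_leftInverse (hf : AnalyticAt 𝕜 f (g x)) (hg : AnalyticAt 𝕜 g x)
    (hfg : (fun w => f (g w)) =ᶠ[𝓝 x] id) (hf1 : deriv f (g x) = 1) :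
    iteratedDeriv 2 g x = -iteratedDeriv 2 f (g x) := by
  have h := (deriv_deriv_comp_mul_sq_add_eventuallyEq_zero hf hg hfg).eq_of_nhds
  simp only [deriv_eq_one_of_leftInverse hf hg hfg hf1, hf1] at h
  simp only [iteratedDeriv_eq_iterate, Function.iterate_succ_apply', Function.iterate_zero_apply]
  linear_combination h

theorem iteratedDeriv_three_of_leftInverse (hf : AnalyticAt 𝕜 f (g x)) (hg : AnalyticAt 𝕜 g x)
    (hfg : (fun w => f (g w)) =ᶠ[𝓝 x] id) (hf1 : deriv f (g x) = 1) :
    iteratedDeriv 3 g x = 3 * iteratedDeriv 2 f (g x) ^ 2 - iteratedDeriv 3 f (g x) := by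
  have hcomp {u : 𝕜 → 𝕜} (hu : AnalyticAt 𝕜 u (g x)) :
      HasDerivAt (fun w => u (g w)) (deriv u (g x) * deriv g x) x :=
    hu.differentiableAt.hasDerivAt.comp x hg.differentiableAt.hasDerivAt
  have hd := ((hcomp hf.deriv.deriv).fun_mul
    (hg.deriv.differentiableAt.hasDerivAt.fun_pow 2)).fun_add
      ((hcomp hf.deriv).fun_mul hg.deriv.deriv.differentiableAt.hasDerivAt)
  have h := (deriv_deriv_comp_mul_sq_add_eventuallyEq_zero hf hg hfg).deriv_eq
  rw [hd.deriv, deriv_const, deriv_eq_one_of_leftInverse hf hg hfg hf1, hf1] at h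
  have h2 := iteratedDeriv_two_of_leftInverse hf hg hfg hf1
  simp only [iteratedDeriv_eq_iterate, Function.iterate_succ_apply',
    Function.iterate_zero_apply] at h2 ⊢
  linear_combination h - 3 * deriv (deriv f) (g x) * h2

end LeftInverse

theorem iteratedDeriv_two_cpow_combination_of_id_mul (lam c : ℂ) {h : ℂ → ℂ}
    (hh : AnalyticAt ℂ h 0) (hh0 : h 0 = 1) :
    iteratedDeriv 2 (fun z => (1 - lam) * h z ^ c +
        lam * deriv (fun w => w * h w) z * h z ^ (c - 1)) 0 =
      (2 * lam + c) * (iteratedDeriv 2 h 0 + (c - 1) * deriv h 0 ^ 2) := by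
  have hslit : h 0 ∈ slitPlane := hh0 ▸ one_mem_slitPlane
  have hF : AnalyticAt ℂ (fun w => w * h w) 0 := analyticAt_id.mul hh
  have hpow (e : ℂ) : AnalyticAt ℂ (fun z => h z ^ e) 0 := hh.cpow analyticAt_const hslit
  have hF' (n : ℕ) :
      iteratedDeriv n (deriv fun w => w * h w) 0 = (n + 1) * iteratedDeriv n h 0 := by
    rw [← iteratedDeriv_succ', iteratedDeriv_succ_id_mul_zero hh.contDiffAt]
  have hd1 : deriv (fun z => h z ^ (c - 1)) 0 = (c - 1) * deriv h 0 := by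
    simp [(hh.differentiableAt.hasDerivAt.cpow_const hslit).deriv, hh0]
  rw [iteratedDeriv_fun_add (analyticAt_const.fun_mul (hpow c)).contDiffAt
      ((analyticAt_const.fun_mul hF.deriv).fun_mul (hpow _)).contDiffAt,
    iteratedDeriv_const_mul_field,
    iteratedDeriv_fun_mul (analyticAt_const.fun_mul hF.deriv).contDiffAt (hpow _).contDiffAt]
  simp only [Finset.sum_range_succ, Finset.range_one, Finset.sum_singleton, Nat.reduceAdd,
    Nat.add_one_sub_one, tsub_zero, tsub_self, iteratedDeriv_zero, iteratedDeriv_one,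
    iteratedDeriv_const_mul_field, hF', hd1, hh.iteratedDeriv_two_cpow_const hslit, hh0, one_cpow,
    Nat.choose_zero_right, Nat.choose_succ_self_right, Nat.choose_self, Nat.cast_ofNat,
    Nat.cast_one, CharP.cast_eq_zero]
  ring

theorem iteratedDeriv_two_eq_of_eventuallyEq_nhdsNE (lam μ : ℂ) {F P : ℂ → ℂ}
    (hF : AnalyticAt ℂ F 0) (hF0 : F 0 = 0) (hF1 : deriv F 0 = 1)
    (hP : ∀ᶠ z in 𝓝[≠] 0,
      P z = (1 - lam) * (F z / z) ^ μ + lam * deriv F z * (F z / z) ^ (μ - 1))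
    (hP0 : P 0 = 1) :
    iteratedDeriv 2 P 0 =
      (2 * lam + μ) * (iteratedDeriv 3 F 0 / 3 + (μ - 1) * (iteratedDeriv 2 F 0 / 2) ^ 2) := by
  obtain ⟨h, hh, hh0, rfl⟩ := hF.exists_eq_id_mul hF0
  rw [hF1] at hh0
  have hPh : P =ᶠ[𝓝 0] fun z => (1 - lam) * h z ^ μ +
      lam * deriv (fun w => w * h w) z * h z ^ (μ - 1) := by
    refine eventuallyEq_nhds_of_eventuallyEq_nhdsNE ?_ (by simp [hP0, hh0, hF1])
    filter_upwards [hP, self_mem_nhdsWithin] with z hz hz0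
    rwa [mul_div_cancel_left₀ _ hz0] at hz
  rw [hPh.iteratedDeriv_eq, iteratedDeriv_two_cpow_combination_of_id_mul lam μ hh hh0,
    iteratedDeriv_succ_id_mul_zero hh.contDiffAt, iteratedDeriv_succ_id_mul_zero hh.contDiffAt]
  simp only [iteratedDeriv_one]
  ring

theorem exp_mul_cos_mul_iteratedDeriv_two {β lam μ : ℝ} {F r : ℂ → ℂ}
    (hF : AnalyticAt ℂ F 0) (hF0 : F 0 = 0) (hF1 : deriv F 0 = 1) (hr0 : r 0 = 1)
    (heq : ∀ z ∈ ball (0 : ℂ) 1, z ≠ 0 →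
      exp (I * β) * ((1 - (lam : ℂ)) * (F z / z) ^ (μ : ℂ) +
          (lam : ℂ) * deriv F z * (F z / z) ^ ((μ : ℂ) - 1))
      = r z * (Real.cos β : ℂ) + I * (Real.sin β : ℂ)) :
    exp (-(I * β)) * Real.cos β * iteratedDeriv 2 r 0 =
      (2 * lam + μ) * (iteratedDeriv 3 F 0 / 3 + (μ - 1) * (iteratedDeriv 2 F 0 / 2) ^ 2) := by
  have hexp : exp (I * β) = Real.cos β + I * Real.sin β := by
    rw [mul_comm, exp_mul_I, ofReal_cos, ofReal_sin, mul_comm I]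
  have hP : ∀ᶠ z in 𝓝[≠] 0, exp (-(I * β)) * (r z * Real.cos β + I * Real.sin β) =
      (1 - (lam : ℂ)) * (F z / z) ^ (μ : ℂ) + lam * deriv F z * (F z / z) ^ ((μ : ℂ) - 1) := by
    filter_upwards [nhdsWithin_le_nhds (ball_mem_nhds (0 : ℂ) one_pos), self_mem_nhdsWithin]
      with z hz hz0
    rw [← heq z hz hz0, ← mul_assoc, ← Complex.exp_add, neg_add_cancel, Complex.exp_zero, one_mul]
  have hP0 : exp (-(I * β)) * (r 0 * Real.cos β + I * Real.sin β) = 1 := by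
    rw [hr0, one_mul, ← hexp, ← Complex.exp_add, neg_add_cancel, Complex.exp_zero]
  rw [← iteratedDeriv_two_eq_of_eventuallyEq_nhdsNE _ _ hF hF0 hF1 hP hP0]
  simp only [iteratedDeriv_const_mul_field, add_comm _ (I * _), iteratedDeriv_const_add two_pos,
    iteratedDeriv_mul_const_field]
  ring

theorem coeff_relation_a3_general
    (β lam μ : ℝ) (hlam : 1 ≤ lam) (hμ : 0 ≤ μ)
    (f g p q : ℂ → ℂ)
    -- `f` is bi-univalent with inverse extension `g`.
    (hf_an : AnalyticOnNhd ℂ f (ball 0 1)) (hf0 : f 0 = 0) (hf1 : deriv f 0 = 1)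
    (hg_an : AnalyticOnNhd ℂ g (ball 0 1))
    (hg0 : g 0 = 0) (hfg : ∀ᶠ w in nhds (0 : ℂ), f (g w) = w)
    (hp0 : p 0 = 1)
    (hq0 : q 0 = 1)
    (heq_p : ∀ z ∈ ball (0 : ℂ) 1, z ≠ 0 →
      Complex.exp (Complex.I * β) *
        ((1 - (lam : ℂ)) * (f z / z) ^ (μ : ℂ) +
          (lam : ℂ) * deriv f z * (f z / z) ^ ((μ : ℂ) - 1))
      = p z * (Real.cos β : ℂ) + Complex.I * (Real.sin β : ℂ))
    (heq_q : ∀ w ∈ ball (0 : ℂ) 1, w ≠ 0 →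
      Complex.exp (Complex.I * β) *
        ((1 - (lam : ℂ)) * (g w / w) ^ (μ : ℂ) +
          (lam : ℂ) * deriv g w * (g w / w) ^ ((μ : ℂ) - 1))
      = q w * (Real.cos β : ℂ) + Complex.I * (Real.sin β : ℂ)) :
    iteratedDeriv 3 f 0 / 6 =
      Complex.exp (-(Complex.I * β)) * (iteratedDeriv 2 p 0 / 2 + iteratedDeriv 2 q 0 / 2) *
        (Real.cos β : ℂ) / ((1 + (μ : ℂ)) * (2 * (lam : ℂ) + (μ : ℂ))) +
      Complex.exp (-(Complex.I * β)) * (iteratedDeriv 2 p 0 / 2 - iteratedDeriv 2 q 0 / 2) *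
        (Real.cos β : ℂ) / (2 * (2 * (lam : ℂ) + (μ : ℂ))) := by
  have hf : AnalyticAt ℂ f 0 := hf_an 0 (mem_ball_self one_pos)
  have hg : AnalyticAt ℂ g 0 := hg_an 0 (mem_ball_self one_pos)
  have hp := exp_mul_cos_mul_iteratedDeriv_two hf hf0 hf1 hp0 heq_p
  rw [← hg0] at hf hf1
  have hq := exp_mul_cos_mul_iteratedDeriv_two hg hg0
    (deriv_eq_one_of_leftInverse hf hg hfg hf1) hq0 heq_q
  rw [iteratedDeriv_two_of_leftInverse hf hg hfg hf1,
    iteratedDeriv_three_of_leftInverse hf hg hfg hf1, hg0] at hq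
  have hs : 2 * (lam : ℂ) + μ ≠ 0 := by exact_mod_cast (by linarith : 0 < 2 * lam + μ).ne'
  have ht : 1 + (μ : ℂ) ≠ 0 := by exact_mod_cast (by linarith : 0 < 1 + μ).ne'
  set E := exp (-(I * β))
  set C := (Real.cos β : ℂ)
  rw [show E * (iteratedDeriv 2 p 0 / 2 + iteratedDeriv 2 q 0 / 2) * C =
      (E * C * iteratedDeriv 2 p 0 + E * C * iteratedDeriv 2 q 0) / 2 by ring,
    show E * (iteratedDeriv 2 p 0 / 2 - iteratedDeriv 2 q 0 / 2) * C =
      (E * C * iteratedDeriv 2 p 0 - E * C * iteratedDeriv 2 q 0) / 2 by ring, hp, hq]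
  field_simp
  ring

/-- For `f` in the class `NP^{μ,λ}_Σ(β,h)` with associated functions `p` and `q`,
one has `a₃ = e^{−iβ}(p₂+q₂)cos β / ((1+μ)(2λ+μ)) + e^{−iβ}(p₂−q₂)cos β / (2(2λ+μ))`. -/
theorem coeff_relation_a3
    (β lam μ : ℝ) (hβ : β ∈ Set.Ioo (-(π / 2)) (π / 2)) (hlam : 1 ≤ lam) (hμ : 0 ≤ μ)
    (f g p q : ℂ → ℂ)
    -- `f` is bi-univalent with inverse extension `g`.
    (hf_an : AnalyticOnNhd ℂ f (ball 0 1)) (hf0 : f 0 = 0) (hf1 : deriv f 0 = 1)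
    (hf_inj : Set.InjOn f (ball 0 1))
    (hg_an : AnalyticOnNhd ℂ g (ball 0 1)) (hg_inj : Set.InjOn g (ball 0 1))
    (hg0 : g 0 = 0) (hfg : ∀ᶠ w in nhds (0 : ℂ), f (g w) = w)
    (hp_an : AnalyticOnNhd ℂ p (ball 0 1)) (hp0 : p 0 = 1)
    (hq_an : AnalyticOnNhd ℂ q (ball 0 1)) (hq0 : q 0 = 1)
    (heq_p : ∀ z ∈ ball (0 : ℂ) 1, z ≠ 0 →
      Complex.exp (Complex.I * β) *
        ((1 - (lam : ℂ)) * (f z / z) ^ (μ : ℂ) +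
          (lam : ℂ) * deriv f z * (f z / z) ^ ((μ : ℂ) - 1))
      = p z * (Real.cos β : ℂ) + Complex.I * (Real.sin β : ℂ))
    (heq_q : ∀ w ∈ ball (0 : ℂ) 1, w ≠ 0 →
      Complex.exp (Complex.I * β) *
        ((1 - (lam : ℂ)) * (g w / w) ^ (μ : ℂ) +
          (lam : ℂ) * deriv g w * (g w / w) ^ ((μ : ℂ) - 1))
      = q w * (Real.cos β : ℂ) + Complex.I * (Real.sin β : ℂ)) :
    iteratedDeriv 3 f 0 / 6 =
      Complex.exp (-(Complex.I * β)) * (iteratedDeriv 2 p 0 / 2 + iteratedDeriv 2 q 0 / 2) *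
        (Real.cos β : ℂ) / ((1 + (μ : ℂ)) * (2 * (lam : ℂ) + (μ : ℂ))) +
      Complex.exp (-(Complex.I * β)) * (iteratedDeriv 2 p 0 / 2 - iteratedDeriv 2 q 0 / 2) *
        (Real.cos β : ℂ) / (2 * (2 * (lam : ℂ) + (μ : ℂ))) :=
  coeff_relation_a3_general β lam μ hlam hμ f g p q hf_an hf0 hf1 hg_an hg0 hfg hp0 hq0 heq_p heq_q
end
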